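/- arXiv:0809.1985 — 2 statements merged into one kernel-verified Lean document; each statement's English description precedes it below -/
import Mathlib

section
/- Let σ > 0 and β ∈ ℝ, and set γ := √(β² + 2σ²). Define H : ℝ → ℝ by H(τ) = −2(e^{γτ} − 1) / ((γ − β)(e^{γτ} − 1) + 2γ). Then H(0) = 0 and, for every τ ≥ 0, H is differentiable at τ with H'(τ) = (σ²/2)·H(τ)² + β·H(τ) − 1. -/
/-!
The CIR coefficient is a quotient `N / D` of affine functions of `E = exp (γ τ)`.
Writing `D = (γ - β) E + (γ + β)`, the quotient rule gives `H' = -4 γ² E / D²`, and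
`γ² = β² + 2 σ²` turns this into the Riccati right-hand side. Since `|β| < γ` when `σ ≠ 0`,
both coefficients of `D` are positive, so `D > 0`.
-/

open Real

namespace CIR

noncomputable def numer (γ τ : ℝ) : ℝ := -2 * (exp (γ * τ) - 1)

noncomputable def denom (β γ τ : ℝ) : ℝ := (γ - β) * (exp (γ * τ) - 1) + 2 * γ

theorem abs_lt_sqrt_sq_add_two_mul_sq (β : ℝ) {σ : ℝ} (hσ : σ ≠ 0) :
    |β| < √(β ^ 2 + 2 * σ ^ 2) := by
  rw [← sqrt_sq_eq_abs]
  exact sqrt_lt_sqrt (sq_nonneg β) (lt_add_of_pos_right _ (by positivity))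

theorem denom_pos {β γ : ℝ} (hβγ : |β| < γ) (τ : ℝ) : 0 < denom β γ τ := by
  have hE := exp_pos (γ * τ)
  have hsub : 0 < γ - β := by linarith [le_abs_self β]
  have hadd : 0 < γ + β := by linarith [neg_abs_le β]
  have : denom β γ τ = (γ - β) * exp (γ * τ) + (γ + β) := by unfold denom; ring
  rw [this]
  positivity

theorem hasDerivAt_numer_div_denom {β γ σ : ℝ} (hγ : γ ^ 2 = β ^ 2 + 2 * σ ^ 2) {τ : ℝ}
    (hD : denom β γ τ ≠ 0) :
    HasDerivAt (fun t => numer γ t / denom β γ t)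
      (σ ^ 2 / 2 * (numer γ τ / denom β γ τ) ^ 2 + β * (numer γ τ / denom β γ τ) - 1) τ := by
  have hE : HasDerivAt (fun t => exp (γ * t) - 1) (γ * exp (γ * τ)) τ := by
    simpa [mul_comm] using (((hasDerivAt_id τ).const_mul γ).exp).sub_const 1
  have hN : HasDerivAt (numer γ) (-2 * (γ * exp (γ * τ))) τ := hE.const_mul (-2)
  have hD' : HasDerivAt (denom β γ) ((γ - β) * (γ * exp (γ * τ))) τ :=
    (hE.const_mul (γ - β)).add_const (2 * γ)
  refine (hN.div hD' hD).congr_deriv ?_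
  have hσ2 : σ ^ 2 = (γ ^ 2 - β ^ 2) / 2 := by linarith
  unfold denom at hD
  unfold numer denom
  rw [hσ2]
  field_simp
  ring

end CIR

/-- The CIR coefficient `H` satisfies `H 0 = 0` and the Riccati ODE
`H' = (σ²/2)·H² + β·H − 1` at every `τ ≥ 0`, where `γ = √(β² + 2σ²)`. -/
theorem cir_H_riccati (σ β : ℝ) (hσ : 0 < σ) (γ : ℝ) (hγ : γ = Real.sqrt (β ^ 2 + 2 * σ ^ 2))
    (H : ℝ → ℝ)
    (hH : ∀ τ : ℝ, H τ =
      -2 * (Real.exp (γ * τ) - 1) / ((γ - β) * (Real.exp (γ * τ) - 1) + 2 * γ)) :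
    H 0 = 0 ∧ ∀ τ : ℝ, 0 ≤ τ →
      HasDerivAt H (σ ^ 2 / 2 * (H τ) ^ 2 + β * H τ - 1) τ := by
  have hHeq : H = fun t => CIR.numer γ t / CIR.denom β γ t := funext hH
  have hβγ : |β| < γ := hγ ▸ CIR.abs_lt_sqrt_sq_add_two_mul_sq β hσ.ne'
  have hγ2 : γ ^ 2 = β ^ 2 + 2 * σ ^ 2 := by
    rw [hγ, sq_sqrt (by positivity)]
  refine ⟨by simp [hH], fun τ _ => ?_⟩
  subst hHeq
  exact CIR.hasDerivAt_numer_div_denom hγ2 (CIR.denom_pos hβγ τ).ne'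
end

section
/- Let C > 1 be real. Then for all real x and k, (e^x − e^k)⁺ = (1/(2π)) · ∫_ℝ e^{(C+iλ)x} · e^{k(1−C−iλ)} / ((C+iλ)(C+iλ−1)) dλ, where (e^x − e^k)⁺ := max(e^x − e^k, 0), the integrand is complex valued, and the integral converges absolutely; in particular the (a priori complex) integral is real. -/
/-!
For `C > 1` the damped payoff `g(y) = e^{-Cy} (e^y - e^k)⁺` is continuous and integrable, and its
Fourier transform at `ξ` is the Laplace transform `∫_k^∞ e^{-sy} (e^y - e^k) dy = e^{k(1-s)}/(s(s-1))`
of the payoff at `s = C + 2πiξ`. Since `|s(s-1)| ≥ |s-1|² = (C-1)² + |2πξ|²`, this transform is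
integrable, so Fourier inversion recovers `g(x)`; the substitution `λ = 2πξ` and multiplication by
`e^{Cx}` give the formula.
-/

open Complex MeasureTheory Set Filter
open scoped Real FourierTransform

lemma norm_sub_one_le_norm {s : ℂ} (hs : 1 / 2 ≤ s.re) : ‖s - 1‖ ≤ ‖s‖ := by
  rw [← sq_le_sq₀ (norm_nonneg _) (norm_nonneg _), Complex.sq_norm, Complex.sq_norm,
    normSq_apply, normSq_apply]
  simp only [sub_re, one_re, sub_im, one_im, sub_zero]
  nlinarith

lemma integrable_inv_sq_add_sq {a : ℝ} (ha : a ≠ 0) :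
    Integrable fun x : ℝ => (a ^ 2 + x ^ 2)⁻¹ := by
  refine ((integrable_inv_one_add_sq.comp_div ha).const_mul (a ^ 2)⁻¹).congr
    (Eventually.of_forall fun x => ?_)
  field_simp

noncomputable def callTransform (k : ℝ) (s : ℂ) : ℂ := cexp (k * (1 - s)) / (s * (s - 1))

noncomputable def dampedCall (C k y : ℝ) : ℂ := cexp (-C * y) * (max (rexp y - rexp k) 0 : ℝ)

section CallPayoff

variable (k : ℝ)

lemma cexp_neg_mul_mul_max_exp_sub (s : ℂ) (y : ℝ) :
    cexp (-s * y) * (max (rexp y - rexp k) 0 : ℝ) =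
      (Ioi k).indicator (fun y : ℝ => cexp (-s * y) * (rexp y - rexp k)) y := by
  rcases le_or_gt y k with hyk | hky
  · rw [max_eq_right (by simpa using hyk), indicator_of_notMem (by simpa using hyk)]
    simp
  · rw [max_eq_left (by simpa using hky.le), indicator_of_mem (show y ∈ Ioi k from hky)]
    push_cast
    rfl

lemma cexp_neg_mul_mul_exp_sub (s : ℂ) (y : ℝ) :
    cexp (-s * y) * (rexp y - rexp k) = cexp ((1 - s) * y) - rexp k * cexp (-s * y) := by
  rw [show (1 - s) * y = y + -s * y by ring, Complex.exp_add, ofReal_exp]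
  ring

variable {s : ℂ} {C : ℝ}

lemma integrableOn_cexp_neg_mul_mul_exp_sub (hs : 1 < s.re) :
    IntegrableOn (fun y : ℝ => cexp (-s * y) * (rexp y - rexp k)) (Ioi k) := by
  simp_rw [cexp_neg_mul_mul_exp_sub]
  exact (integrableOn_exp_mul_complex_Ioi (by simpa using hs) k).sub
    ((integrableOn_exp_mul_complex_Ioi (by simp; linarith) k).const_mul _)

lemma integral_Ioi_cexp_neg_mul_mul_exp_sub (hs : 1 < s.re) :
    ∫ y in Ioi k, cexp (-s * y) * (rexp y - rexp k) = callTransform k s := by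
  have hs₀ : s ≠ 0 := by rintro rfl; simp at hs; linarith
  have hs₁ : s - 1 ≠ 0 := by intro h; rw [sub_eq_zero.1 h] at hs; simp at hs
  have hs₁' : 1 - s ≠ 0 := by rwa [← neg_sub, neg_ne_zero]
  simp_rw [cexp_neg_mul_mul_exp_sub]
  rw [integral_sub (integrableOn_exp_mul_complex_Ioi (by simpa using hs) k)
      ((integrableOn_exp_mul_complex_Ioi (by simp; linarith) k).const_mul _),
    integral_const_mul, integral_exp_mul_complex_Ioi (by simpa using hs),
    integral_exp_mul_complex_Ioi (by simp; linarith), mul_comm (1 - s)]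
  have hk : (rexp k : ℂ) * (-cexp (-s * k) / -s) = cexp (k * (1 - s)) / s := by
    rw [neg_div_neg_eq, ← mul_div_assoc, ofReal_exp, ← Complex.exp_add]
    ring_nf
  rw [hk, callTransform]
  field_simp
  ring

lemma norm_callTransform_le (hs : 1 < s.re) :
    ‖callTransform k s‖ ≤ rexp (k * (1 - s.re)) * ((s.re - 1) ^ 2 + s.im ^ 2)⁻¹ := by
  have hpos : 0 < (s.re - 1) ^ 2 + s.im ^ 2 := by nlinarith [sq_nonneg s.im]
  have hden : (s.re - 1) ^ 2 + s.im ^ 2 ≤ ‖s * (s - 1)‖ := by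
    calc (s.re - 1) ^ 2 + s.im ^ 2 = ‖s - 1‖ * ‖s - 1‖ := by
          rw [← sq, Complex.sq_norm, normSq_apply]; simp; ring
      _ ≤ ‖s‖ * ‖s - 1‖ := by gcongr; exact norm_sub_one_le_norm (by linarith)
      _ = ‖s * (s - 1)‖ := (norm_mul _ _).symm
  rw [callTransform, norm_div, Complex.norm_exp, div_eq_mul_inv]
  gcongr
  simp

lemma integrable_callTransform (hC : 1 < C) :
    Integrable fun l : ℝ => callTransform k (C + l * I) := by
  refine ((integrable_inv_sq_add_sq (sub_ne_zero.2 hC.ne')).const_mul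
    (rexp (k * (1 - C)))).mono' ?_ (Eventually.of_forall fun l => ?_)
  · exact (by unfold callTransform; fun_prop : Measurable _).aestronglyMeasurable
  · simpa using norm_callTransform_le k (s := C + l * I) (by simpa using hC)

lemma dampedCall_eq_indicator :
    dampedCall C k = (Ioi k).indicator (fun y : ℝ => cexp (-C * y) * (rexp y - rexp k)) :=
  funext (cexp_neg_mul_mul_max_exp_sub k C)

lemma continuous_dampedCall : Continuous (dampedCall C k) := by
  unfold dampedCall; fun_prop

lemma integrable_dampedCall (hC : 1 < C) : Integrable (dampedCall C k) := by
  rw [dampedCall_eq_indicator, integrable_indicator_iff measurableSet_Ioi]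
  exact integrableOn_cexp_neg_mul_mul_exp_sub k (by simpa using hC)

lemma fourier_dampedCall (hC : 1 < C) (ξ : ℝ) :
    𝓕 (dampedCall C k) ξ = callTransform k (C + (2 * π * ξ : ℝ) * I) := by
  rw [Real.fourier_real_eq_integral_exp_smul, ← integral_Ioi_cexp_neg_mul_mul_exp_sub k
    (by simpa using hC), ← integral_indicator measurableSet_Ioi]
  congr 1 with y
  rw [← cexp_neg_mul_mul_max_exp_sub, dampedCall, smul_eq_mul, ← mul_assoc, ← Complex.exp_add]
  push_cast
  ring_nf

lemma integrable_fourier_dampedCall (hC : 1 < C) : Integrable (𝓕 (dampedCall C k)) := by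
  have h := (integrable_comp_mul_left_iff _ (by positivity : 2 * π ≠ 0)).2
    (integrable_callTransform k hC)
  exact h.congr (Eventually.of_forall fun ξ => (fourier_dampedCall k hC ξ).symm)

lemma dampedCall_eq_integral (hC : 1 < C) (x : ℝ) :
    dampedCall C k x = 1 / (2 * π) * ∫ l : ℝ, cexp (l * x * I) * callTransform k (C + l * I) := by
  rw [← (integrable_dampedCall k hC).fourierInv_fourier_eq (integrable_fourier_dampedCall k hC)
    (continuous_dampedCall k).continuousAt, Real.fourierInv_eq']
  set g : ℝ → ℂ := fun l => cexp (l * x * I) * callTransform k (C + l * I)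
  have hg (ξ : ℝ) : cexp (↑(2 * π * inner ℝ ξ x) * I) • 𝓕 (dampedCall C k) ξ = g (2 * π * ξ) := by
    rw [fourier_dampedCall k hC, smul_eq_mul, Real.inner_apply]
    simp only [g]
    push_cast
    ring_nf
  simp_rw [hg]
  rw [Measure.integral_comp_mul_left g (2 * π), abs_of_pos (by positivity), Complex.real_smul]
  push_cast
  ring

end CallPayoff

/-- Fourier representation of the call payoff: for `C > 1` and all real `x, k`,
`(e^x − e^k)⁺ = (1/2π) ∫_ℝ e^{(C+iλ)x} e^{k(1−C−iλ)}/((C+iλ)(C+iλ−1)) dλ`, the integral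
converging absolutely; in particular the a priori complex integral is real. -/
theorem call_payoff_fourier (C : ℝ) (hC : 1 < C) (x k : ℝ) :
    Integrable (fun l : ℝ =>
      Complex.exp ((C + l * Complex.I) * x) * Complex.exp (k * (1 - C - l * Complex.I)) /
        ((C + l * Complex.I) * (C + l * Complex.I - 1))) volume ∧
    (↑(max (Real.exp x - Real.exp k) 0) : ℂ) = 1 / (2 * Real.pi) *
      ∫ l : ℝ, Complex.exp ((C + l * Complex.I) * x) *
        Complex.exp (k * (1 - C - l * Complex.I)) /
          ((C + l * Complex.I) * (C + l * Complex.I - 1)) := by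
  have hΦ : (fun l : ℝ => cexp ((C + l * I) * x) * cexp (k * (1 - C - l * I)) /
      ((C + l * I) * (C + l * I - 1))) =
      fun l : ℝ => cexp (C * x) * (cexp (l * x * I) * callTransform k (C + l * I)) := by
    ext l
    simp only [callTransform, mul_div_assoc', ← Complex.exp_add]
    ring_nf
  rw [hΦ]
  refine ⟨((integrable_callTransform k hC).bdd_mul (c := 1) (by fun_prop)
    (Eventually.of_forall fun l => ?_)).const_mul _, ?_⟩
  · rw [← ofReal_mul, norm_exp_ofReal_mul_I]
  · rw [integral_const_mul, mul_left_comm, ← dampedCall_eq_integral k hC, dampedCall,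
      ← mul_assoc, ← Complex.exp_add]
    simp
end
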